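/- Let n > 2. If (x,n-1) is irreducible in S_Γ^s and (x-s,n) ∈ S_Γ^s, then (x-s,n) is irreducible in S_Γ^s. -/

import Mathlib

/-!
If `(x - s, n) = a + b` with `a, b` nonzero in `S_Γ^s`, then `n ≥ 3` forces one summand, say
`a = (a₁, a₂)`, to have `a₂ ≥ 2`. Trading one step of `s` from the second coordinate into the
first keeps it in the monoid: `(a₁ + s, a₂ - 1) ∈ S_Γ^s`, since `a₁ + s + i s = a₁ + (i + 1) s`.
Adding `b` back then splits `(x, n - 1)`, contradicting its irreducibility.
-/

/-- The Leamer monoid as a subset of ℕ × ℕ: (0,0) together with all (x,n), n ≥ 1,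
such that x + i*s ∈ Γ for all 0 ≤ i ≤ n. -/
def Leamer (Γ : AddSubmonoid ℕ) (s : ℕ) : Set (ℕ × ℕ) :=
  {p | p = (0, 0) ∨ (1 ≤ p.2 ∧ ∀ i ≤ p.2, p.1 + i * s ∈ Γ)}

/-- An irreducible (atom) of a subset S of ℕ × ℕ: a nonzero element of S that is not the
sum of two nonzero elements of S. -/
def LIrred (S : Set (ℕ × ℕ)) (z : ℕ × ℕ) : Prop :=
  z ∈ S ∧ z ≠ 0 ∧ ∀ a b : ℕ × ℕ, a ∈ S → b ∈ S → a ≠ 0 → b ≠ 0 → z ≠ a + b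

/-- A reducible element of S: an element of S that is the sum of two nonzero elements of S. -/
def LReducible (S : Set (ℕ × ℕ)) (z : ℕ × ℕ) : Prop :=
  z ∈ S ∧ ∃ a b : ℕ × ℕ, a ∈ S ∧ b ∈ S ∧ a ≠ 0 ∧ b ≠ 0 ∧ z = a + b

/-- The set of factorization lengths of z into irreducibles of S. -/
def LSet (S : Set (ℕ × ℕ)) (z : ℕ × ℕ) : Set ℕ :=
  {r | ∃ l : Multiset (ℕ × ℕ), Multiset.card l = r ∧ (∀ a ∈ l, LIrred S a) ∧ l.sum = z}

/-- The Delta set of z: differences of successive factorization lengths. -/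
def LDelta (S : Set (ℕ × ℕ)) (z : ℕ × ℕ) : Set ℕ :=
  {d | ∃ a b, a ∈ LSet S z ∧ b ∈ LSet S z ∧ a < b ∧
    (∀ c, a < c → c < b → c ∉ LSet S z) ∧ d = b - a}

/-- The Delta set of the monoid S. -/
def LDeltaMonoid (S : Set (ℕ × ℕ)) : Set ℕ :=
  {d | ∃ z, z ∈ S ∧ z ≠ 0 ∧ d ∈ LDelta S z}

/-- The Frobenius number of a numerical monoid Γ. -/
noncomputable def Frob (Γ : AddSubmonoid ℕ) : ℕ := sSup {x | x ∉ Γ}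

/-- The numerical monoid generated by the arithmetic sequence m, m+s, ..., m+ks. -/
def ArithGamma (m k s : ℕ) : AddSubmonoid ℕ :=
  AddSubmonoid.closure {v | ∃ j ≤ k, v = m + j * s}

theorem lIrred_iff_not_lReducible {S : Set (ℕ × ℕ)} {z : ℕ × ℕ} :
    LIrred S z ↔ z ∈ S ∧ z ≠ 0 ∧ ¬LReducible S z := by
  unfold LIrred LReducible
  grind

namespace Leamer

variable {Γ : AddSubmonoid ℕ} {s y m : ℕ}

theorem one_le_snd {p : ℕ × ℕ} (hp : p ∈ Leamer Γ s) (hp0 : p ≠ 0) : 1 ≤ p.2 :=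
  (hp.resolve_left hp0).1

theorem shift_mem (h : (y, m) ∈ Leamer Γ s) (hm : 2 ≤ m) : (y + s, m - 1) ∈ Leamer Γ s := by
  obtain ⟨-, hΓ⟩ := h.resolve_left (by simp only [Prod.mk.injEq]; omega)
  refine Or.inr ⟨by omega, fun i hi => ?_⟩
  convert hΓ (i + 1) (by simp only at hi ⊢; omega) using 1
  ring

theorem lReducible_shift (h : LReducible (Leamer Γ s) (y, m)) (hm : 2 < m) :
    LReducible (Leamer Γ s) (y + s, m - 1) := by
  obtain ⟨hmem, a, b, ha, hb, ha0, hb0, hab⟩ := h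
  refine ⟨shift_mem hmem hm.le, ?_⟩
  wlog ha2 : 2 ≤ a.2 generalizing a b
  · have hm_eq : m = a.2 + b.2 := congrArg Prod.snd hab
    have ha1 := one_le_snd ha ha0
    exact this b a hb ha hb0 ha0 (by rw [hab, add_comm]) (by omega)
  obtain ⟨a₁, a₂⟩ := a
  obtain ⟨b₁, b₂⟩ := b
  have hb2 := one_le_snd hb hb0
  simp only [Prod.mk_add_mk, Prod.mk.injEq] at hab ha2 hb2
  refine ⟨(a₁ + s, a₂ - 1), (b₁, b₂), shift_mem ha ha2, hb, ?_, hb0, ?_⟩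
  · simp only [ne_eq, Prod.mk_eq_zero]; omega
  · simp only [Prod.mk_add_mk, Prod.mk.injEq]; omega

end Leamer

theorem stmt5_general (Γ : AddSubmonoid ℕ) (s : ℕ)
    (x n : ℕ) (hsx : s ≤ x) (hn : 2 < n) (h1 : LIrred (Leamer Γ s) (x, n - 1))
    (h2 : (x - s, n) ∈ Leamer Γ s) : LIrred (Leamer Γ s) (x - s, n) := by
  refine lIrred_iff_not_lReducible.2
    ⟨h2, by simp only [ne_eq, Prod.mk_eq_zero]; omega, fun hred => ?_⟩
  have hred_shift := Leamer.lReducible_shift hred hn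
  rw [Nat.sub_add_cancel hsx] at hred_shift
  exact (lIrred_iff_not_lReducible.1 h1).2.2 hred_shift

theorem stmt5 (Γ : AddSubmonoid ℕ) (hΓ : {x : ℕ | x ∉ Γ}.Finite) (s : ℕ) (hs : s ∉ Γ)
    (x n : ℕ) (hsx : s ≤ x) (hn : 2 < n) (h1 : LIrred (Leamer Γ s) (x, n - 1))
    (h2 : (x - s, n) ∈ Leamer Γ s) : LIrred (Leamer Γ s) (x - s, n) :=
  stmt5_general Γ s x n hsx hn h1 h2
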